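/- arXiv:1711.08651 — 8 statements merged into one kernel-verified Lean document; each statement's English description precedes it below -/
import Mathlib

section
/- With the operators A_i and A as defined from subspaces U_1,…,U_m of ℝ^n, the fixed point set of A equals S := ⋂_{i=1}^m U_i, i.e., A(x) = x if and only if x ∈ U_i for every i. -/
theorem stmt6 {n m : ℕ} (hm : 0 < m)
    (U : Fin m → Submodule ℝ (EuclideanSpace ℝ (Fin n)))
    (comp : Fin (m + 1) → EuclideanSpace ℝ (Fin n) → EuclideanSpace ℝ (Fin n))
    (hcomp0 : ∀ z, comp 0 z = z)
    (hcompS : ∀ (i : Fin m) z, comp i.succ z =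
      (2 : ℝ) • (↑(Submodule.orthogonalProjectionOnto (U i) (comp i.castSucc z)) : EuclideanSpace ℝ (Fin n))
        - comp i.castSucc z)
    (A : EuclideanSpace ℝ (Fin n) → EuclideanSpace ℝ (Fin n))
    (hA : ∀ z, A z = (m : ℝ)⁻¹ • ∑ i : Fin m, (1 / 2 : ℝ) •
      (z + (↑(Submodule.orthogonalProjectionOnto (U i) (comp i.castSucc z)) : EuclideanSpace ℝ (Fin n))))
    (x : EuclideanSpace ℝ (Fin n)) :
    A x = x ↔ ∀ i, x ∈ U i := by
  have hm' : (m : ℝ) ≠ 0 := Nat.cast_ne_zero.mpr hm.ne'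
  set y : Fin m → EuclideanSpace ℝ (Fin n) :=
    fun i => (↑(Submodule.orthogonalProjectionOnto (U i) (comp i.castSucc x)) : EuclideanSpace ℝ (Fin n))
    with hy
  constructor
  · intro hfix
    -- norm preservation along the composition
    have hnorm : ∀ k : Fin (m + 1), ‖comp k x‖ = ‖x‖ := by
      intro k
      induction k using Fin.induction with
      | zero => rw [hcomp0]
      | succ i ih =>
        rw [hcompS]
        set z := comp i.castSucc x with hz
        set p : EuclideanSpace ℝ (Fin n) := (↑(Submodule.orthogonalProjectionOnto (U i) z)) with hp
        have h0 : (inner ℝ (z - p) p : ℝ) = 0 :=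
          Submodule.starProjection_inner_eq_zero z p (SetLike.coe_mem _)
        have hzp : (inner ℝ z p : ℝ) = ‖p‖ ^ 2 := by
          have := inner_sub_left (𝕜 := ℝ) z p p
          rw [h0, real_inner_self_eq_norm_sq] at this
          linarith
        have hsq : ‖(2 : ℝ) • p - z‖ ^ 2 = ‖z‖ ^ 2 := by
          rw [norm_sub_sq_real, norm_smul, real_inner_smul_left,
            real_inner_comm, hzp]
          simp [norm_smul]
          ring
        have := (sq_eq_sq₀ (norm_nonneg _) (norm_nonneg _)).mp hsq
        rw [this, ih]
    -- norm of each projection ≤ ‖x‖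
    have hyle : ∀ i, ‖y i‖ ≤ ‖x‖ := by
      intro i
      have h0 : (inner ℝ (comp i.castSucc x - y i) (y i) : ℝ) = 0 :=
        Submodule.starProjection_inner_eq_zero _ _ (SetLike.coe_mem _)
      have hzp : (inner ℝ (comp i.castSucc x) (y i) : ℝ) = ‖y i‖ ^ 2 := by
        have := inner_sub_left (𝕜 := ℝ) (comp i.castSucc x) (y i) (y i)
        rw [h0, real_inner_self_eq_norm_sq] at this
        linarith
      have hcs := real_inner_le_norm (comp i.castSucc x) (y i)
      rw [hzp, hnorm] at hcs
      nlinarith [norm_nonneg (y i), norm_nonneg x]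
    -- the fixed point equation gives ∑ ⟪x, y i⟫ = m * ‖x‖²
    have heq : ∑ i : Fin m, (inner ℝ x (y i) : ℝ) = (m : ℝ) * ‖x‖ ^ 2 := by
      have hAx : A x = (m : ℝ)⁻¹ • ∑ i : Fin m, (1 / 2 : ℝ) • (x + y i) := hA x
      have h1 : (m : ℝ) • x = ∑ i : Fin m, (1 / 2 : ℝ) • (x + y i) := by
        have h' : x = (m : ℝ)⁻¹ • ∑ i : Fin m, (1 / 2 : ℝ) • (x + y i) := (hAx.symm.trans hfix).symm
        calc (m : ℝ) • x = (m : ℝ) • ((m : ℝ)⁻¹ • ∑ i : Fin m, (1 / 2 : ℝ) • (x + y i)) := by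
              rw [← h']
          _ = _ := by rw [smul_smul, mul_inv_cancel₀ hm', one_smul]
      have h2 := congrArg (fun v => (inner ℝ x v : ℝ)) h1
      simp only [inner_sum, real_inner_smul_right, inner_add_right,
        real_inner_self_eq_norm_sq] at h2
      have h3 : ∑ i : Fin m, (1 / 2 : ℝ) * (‖x‖ ^ 2 + inner ℝ x (y i)) =
          (m : ℝ) / 2 * ‖x‖ ^ 2 + (1 / 2) * ∑ i : Fin m, (inner ℝ x (y i) : ℝ) := by
        rw [Finset.sum_congr rfl (fun i _ => mul_add (1/2 : ℝ) _ _), Finset.sum_add_distrib,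
          Finset.sum_const, ← Finset.mul_sum]
        simp
        ring
      rw [h3] at h2
      linarith [h2]
    -- each inner product ≤ ‖x‖², hence equality everywhere
    have hle : ∀ i : Fin m, (inner ℝ x (y i) : ℝ) ≤ ‖x‖ ^ 2 := by
      intro i
      have := real_inner_le_norm x (y i)
      nlinarith [hyle i, norm_nonneg x, norm_nonneg (y i)]
    have heach : ∀ i : Fin m, (inner ℝ x (y i) : ℝ) = ‖x‖ ^ 2 := by
      by_contra hc
      push_neg at hc
      obtain ⟨j, hj⟩ := hc
      have hjlt : (inner ℝ x (y j) : ℝ) < ‖x‖ ^ 2 := lt_of_le_of_ne (hle j) hj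
      have : ∑ i : Fin m, (inner ℝ x (y i) : ℝ) < ∑ i : Fin m, ‖x‖ ^ 2 :=
        Finset.sum_lt_sum (fun i _ => hle i) ⟨j, Finset.mem_univ j, hjlt⟩
      rw [Finset.sum_const, Finset.card_univ, Fintype.card_fin, nsmul_eq_mul] at this
      linarith [heq]
    -- conclude y i = x, hence x ∈ U i
    intro i
    have hxy : x = y i := by
      have hs : ‖x - y i‖ ^ 2 ≤ 0 := by
        rw [norm_sub_sq_real, heach i]
        nlinarith [hyle i, norm_nonneg x, norm_nonneg (y i)]
      have : ‖x - y i‖ = 0 := by nlinarith [norm_nonneg (x - y i)]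
      exact (sub_eq_zero.mp (norm_eq_zero.mp this)).symm ▸ rfl
    rw [hxy]
    exact SetLike.coe_mem _
  · intro hx
    have hcompfix : ∀ k : Fin (m + 1), comp k x = x := by
      intro k
      induction k using Fin.induction with
      | zero => exact hcomp0 x
      | succ i ih =>
        rw [hcompS, ih, (show ((U i).orthogonalProjectionOnto x : EuclideanSpace ℝ (Fin n)) = x from Submodule.starProjection_eq_self_iff.mpr (hx i))]
        module
    rw [hA]
    have : ∀ i : Fin m,
        (↑(Submodule.orthogonalProjectionOnto (U i) (comp i.castSucc x)) : EuclideanSpace ℝ (Fin n)) = x := by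
      intro i
      rw [hcompfix, (show ((U i).orthogonalProjectionOnto x : EuclideanSpace ℝ (Fin n)) = x from Submodule.starProjection_eq_self_iff.mpr (hx i))]
    simp only [this]
    rw [Finset.sum_const, Finset.card_univ, Fintype.card_fin]
    have hhalf : (1 / 2 : ℝ) • (x + x) = x := by module
    rw [hhalf, ← Nat.cast_smul_eq_nsmul ℝ m x, smul_smul, inv_mul_cancel₀ hm', one_smul]
end

section
/- Let T : ℝ^n → ℝ^n be a firmly non-expansive linear map with fixed point subspace S. Then there exists r ∈ [0,1) such that ‖T(x) − P_S(x)‖ ≤ r ‖x − P_S(x)‖ for all x ∈ ℝ^n; one may take r = sup{‖T y‖ : y ∈ S^⊥, ‖y‖ = 1} (with r = 0 if S^⊥ = {0}). -/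
theorem stmt10 {n : ℕ} (T : EuclideanSpace ℝ (Fin n) →ₗ[ℝ] EuclideanSpace ℝ (Fin n))
    (hfne : ∀ x y, ‖T x - T y‖ ^ 2 ≤ (inner ℝ (T x - T y) (x - y) : ℝ))
    (S : Submodule ℝ (EuclideanSpace ℝ (Fin n)))
    (hS : ∀ z, z ∈ S ↔ T z = z)
    (r : ℝ) (hr : r = sSup ((fun y => ‖T y‖) '' {y | y ∈ Sᗮ ∧ ‖y‖ = 1})) :
    0 ≤ r ∧ r < 1 ∧ ∀ x : EuclideanSpace ℝ (Fin n),
      ‖T x - ↑(Submodule.orthogonalProjectionOnto S x)‖ ≤ r * ‖x - ↑(Submodule.orthogonalProjectionOnto S x)‖ := by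
  have hT0 : T 0 = 0 := map_zero T
  have hkey : ∀ z, ‖T z‖ ^ 2 ≤ (inner ℝ (T z) z : ℝ) := by
    intro z
    have h := hfne z 0
    simpa [hT0] using h
  have hnon : ∀ z, ‖T z‖ ≤ ‖z‖ := by
    intro z
    have h := hkey z
    have hcs : (inner ℝ (T z) z : ℝ) ≤ ‖T z‖ * ‖z‖ := real_inner_le_norm _ _
    nlinarith [norm_nonneg (T z), norm_nonneg z]
  have hunit : ∀ y, y ∈ Sᗮ → ‖y‖ = 1 → ‖T y‖ < 1 := by
    intro y hy hy1
    rcases lt_or_eq_of_le (le_of_le_of_eq (hnon y) hy1) with h | h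
    · exact h
    exfalso
    have h2 := hkey y
    have hcs : (inner ℝ (T y) y : ℝ) ≤ ‖T y‖ * ‖y‖ := real_inner_le_norm _ _
    have hinner : (inner ℝ (T y) y : ℝ) = 1 := by nlinarith
    have hTy : T y = y := by
      have hsub : ‖T y - y‖ ^ 2 = 0 := by
        rw [norm_sub_sq_real]
        nlinarith
      have := pow_eq_zero_iff (n := 2) (by norm_num) |>.mp hsub
      rwa [norm_eq_zero, sub_eq_zero] at this
    have hyS : y ∈ S := (hS y).mpr hTy
    have hzero : (inner ℝ y y : ℝ) = 0 := hy y hyS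
    have : y = 0 := inner_self_eq_zero.mp hzero
    rw [this, norm_zero] at hy1
    norm_num at hy1
  set K : Set (EuclideanSpace ℝ (Fin n)) := {y | y ∈ Sᗮ ∧ ‖y‖ = 1} with hK
  have hbdd : BddAbove ((fun y => ‖T y‖) '' K) := by
    refine ⟨1, ?_⟩
    rintro _ ⟨y, ⟨hy, hy1⟩, rfl⟩
    exact le_of_lt (hunit y hy hy1)
  have hr0 : 0 ≤ r := by
    rw [hr]
    apply Real.sSup_nonneg
    rintro _ ⟨y, _, rfl⟩
    exact norm_nonneg _
  have hr1 : r < 1 := by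
    rcases Set.eq_empty_or_nonempty K with hKe | hKne
    · rw [hr, hKe]
      simp [Real.sSup_empty]
    · have hKclosed : IsClosed K := by
        have : K = (Sᗮ : Set (EuclideanSpace ℝ (Fin n))) ∩ Metric.sphere 0 1 := by
          ext y
          simp [hK, mem_sphere_zero_iff_norm]
        rw [this]
        exact (Submodule.closed_of_finiteDimensional Sᗮ).inter Metric.isClosed_sphere
      have hKbounded : Bornology.IsBounded K := by
        apply Bornology.IsBounded.subset (Metric.isBounded_closedBall (x := (0:EuclideanSpace ℝ (Fin n))) (r := 1))
        rintro y ⟨_, hy1⟩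
        simpa [Metric.mem_closedBall, dist_zero_right] using le_of_eq hy1
      have hKc : IsCompact K := Metric.isCompact_of_isClosed_isBounded hKclosed hKbounded
      have hcont : Continuous fun y : EuclideanSpace ℝ (Fin n) => ‖T y‖ :=
        T.continuous_of_finiteDimensional.norm
      have himc : IsCompact ((fun y => ‖T y‖) '' K) := hKc.image hcont
      have hne : ((fun y => ‖T y‖) '' K).Nonempty := hKne.image _
      have hmem : sSup ((fun y => ‖T y‖) '' K) ∈ (fun y => ‖T y‖) '' K :=
        himc.sSup_mem hne
      rw [hr]
      rcases hmem with ⟨y, ⟨hy, hy1⟩, heq⟩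
      rw [← heq]
      exact hunit y hy hy1
  have hbound : ∀ y, y ∈ Sᗮ → ‖T y‖ ≤ r * ‖y‖ := by
    intro y hy
    rcases eq_or_ne y 0 with rfl | hy0
    · simp [hT0]
    · have hn : (0:ℝ) < ‖y‖ := norm_pos_iff.mpr hy0
      set u := ‖y‖⁻¹ • y with hu_def
      have hu : u ∈ Sᗮ := Sᗮ.smul_mem _ hy
      have hu1 : ‖u‖ = 1 := by
        rw [hu_def, norm_smul, norm_inv, norm_norm]
        field_simp
      have hle : ‖T u‖ ≤ r := by
        rw [hr]
        exact le_csSup hbdd ⟨u, ⟨hu, hu1⟩, rfl⟩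
      have hTu : T u = ‖y‖⁻¹ • T y := by rw [hu_def, map_smul]
      have hnTu : ‖T u‖ = ‖y‖⁻¹ * ‖T y‖ := by
        rw [hTu, norm_smul, norm_inv, norm_norm]
      have := mul_le_mul_of_nonneg_left hle (le_of_lt hn)
      rw [hnTu] at this
      calc ‖T y‖ = ‖y‖ * (‖y‖⁻¹ * ‖T y‖) := by field_simp
        _ ≤ ‖y‖ * r := this
        _ = r * ‖y‖ := mul_comm _ _
  refine ⟨hr0, hr1, fun x => ?_⟩
  have hpS : (↑(Submodule.orthogonalProjectionOnto S x) : EuclideanSpace ℝ (Fin n)) ∈ S :=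
    (Submodule.orthogonalProjectionOnto S x).2
  have hTp : T ↑(Submodule.orthogonalProjectionOnto S x) = ↑(Submodule.orthogonalProjectionOnto S x) := (hS _).mp hpS
  have hmemo : x - ↑(Submodule.orthogonalProjectionOnto S x) ∈ Sᗮ :=
    Submodule.sub_starProjection_mem_orthogonal (K := S) x
  have heq : T x - ↑(Submodule.orthogonalProjectionOnto S x) = T (x - ↑(Submodule.orthogonalProjectionOnto S x)) := by
    rw [map_sub, hTp]
  rw [heq]
  exact hbound _ hmemo
end

section
/- Let T : ℝ^n → ℝ^n be a firmly non-expansive linear map with fixed point subspace S and let r := sup{‖Ty‖ : y ∈ S^⊥, ‖y‖=1} < 1. Then for every x ∈ ℝ^n the sequence T^k(x) converges to P_S(x), and ‖T^k(x) − P_S(x)‖ ≤ r^k ‖x − P_S(x)‖ for all k. -/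
theorem stmt12 {n : ℕ} (T : EuclideanSpace ℝ (Fin n) →ₗ[ℝ] EuclideanSpace ℝ (Fin n))
    (hfne : ∀ x y, ‖T x - T y‖ ^ 2 ≤ (inner ℝ (T x - T y) (x - y) : ℝ))
    (S : Submodule ℝ (EuclideanSpace ℝ (Fin n)))
    (hS : ∀ z, z ∈ S ↔ T z = z)
    (r : ℝ) (hr : r = sSup ((fun y => ‖T y‖) '' {y | y ∈ Sᗮ ∧ ‖y‖ = 1}))
    (hr1 : r < 1) (x : EuclideanSpace ℝ (Fin n)) :
    Filter.Tendsto (fun k => (fun z => T z)^[k] x) Filter.atTop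
      (nhds (↑(S.orthogonalProjection x))) ∧
    ∀ k : ℕ, ‖(fun z => T z)^[k] x - ↑(S.orthogonalProjection x)‖ ≤
      r ^ k * ‖x - ↑(S.orthogonalProjection x)‖ := by
  -- T is 1-Lipschitz
  have hmono : ∀ z, ‖T z‖ ^ 2 ≤ (inner ℝ (T z) z : ℝ) := by
    intro z
    have := hfne z 0
    simpa using this
  have hlip : ∀ z, ‖T z‖ ≤ ‖z‖ := by
    intro z
    have h1 := hmono z
    have h2 : (inner ℝ (T z) z : ℝ) ≤ ‖T z‖ * ‖z‖ := real_inner_le_norm _ _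
    nlinarith [norm_nonneg (T z), norm_nonneg z]
  -- T maps Sᗮ into Sᗮ
  have hinv : ∀ y ∈ Sᗮ, T y ∈ Sᗮ := by
    intro y hy
    rw [Submodule.mem_orthogonal]
    intro s hs
    have hTs : T s = s := (hS s).mp hs
    have hys : (inner ℝ s y : ℝ) = 0 := (Submodule.mem_orthogonal S y).mp hy s hs
    have key : ∀ t : ℝ, ‖T y‖ ^ 2 - (inner ℝ (T y) y : ℝ) ≤ t * (inner ℝ (T y) s : ℝ) := by
      intro t
      have h := hfne y (t • s)
      have hTts : T (t • s) = t • s := by rw [map_smul, hTs]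
      rw [hTts] at h
      have e1 : ‖T y - t • s‖ ^ 2 =
          ‖T y‖ ^ 2 - 2 * (t * (inner ℝ (T y) s : ℝ)) + t ^ 2 * ‖s‖ ^ 2 := by
        rw [norm_sub_sq_real, real_inner_smul_right, norm_smul]
        simp [Real.norm_eq_abs, mul_pow, sq_abs]
      have e2 : (inner ℝ (T y - t • s) (y - t • s) : ℝ) =
          (inner ℝ (T y) y : ℝ) - t * (inner ℝ (T y) s : ℝ)
            - t * (inner ℝ s y : ℝ) + t ^ 2 * ‖s‖ ^ 2 := by
        rw [inner_sub_left, inner_sub_right, inner_sub_right, real_inner_smul_left,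
          real_inner_smul_left, real_inner_smul_right, real_inner_smul_right,
          real_inner_self_eq_norm_sq]
        ring
      rw [e1, e2, hys] at h
      nlinarith
    set L := ‖T y‖ ^ 2 - (inner ℝ (T y) y : ℝ) with hL
    set c := (inner ℝ (T y) s : ℝ) with hc
    by_contra hne
    have hcne : c ≠ 0 := by
      intro h; apply hne
      rw [real_inner_comm]; exact h
    have := key ((L - 1) / c)
    rw [div_mul_cancel₀ _ hcne] at this
    linarith
  -- r is nonneg
  have hr0 : 0 ≤ r := by
    rw [hr]
    apply Real.sSup_nonneg
    rintro _ ⟨y, -, rfl⟩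
    exact norm_nonneg _
  -- norm bound on Sᗮ
  have hbd : ∀ y ∈ Sᗮ, ‖T y‖ ≤ r * ‖y‖ := by
    intro y hy
    rcases eq_or_ne y 0 with rfl | hy0
    · simp
    · have hny : ‖y‖ ≠ 0 := norm_ne_zero_iff.mpr hy0
      set u := ‖y‖⁻¹ • y with hu
      have hunorm : ‖u‖ = 1 := by
        rw [hu, norm_smul, norm_inv, norm_norm, inv_mul_cancel₀ hny]
      have humem : u ∈ Sᗮ := Submodule.smul_mem _ _ hy
      have hmem : ‖T u‖ ∈ ((fun y => ‖T y‖) '' {y | y ∈ Sᗮ ∧ ‖y‖ = 1}) :=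
        ⟨u, ⟨humem, hunorm⟩, rfl⟩
      have hbdd : BddAbove ((fun y => ‖T y‖) '' {y | y ∈ Sᗮ ∧ ‖y‖ = 1}) := by
        refine ⟨1, ?_⟩
        rintro _ ⟨z, ⟨-, hz1⟩, rfl⟩
        calc ‖T z‖ ≤ ‖z‖ := hlip z
        _ = 1 := hz1
      have hTu : ‖T u‖ ≤ r := by rw [hr]; exact le_csSup hbdd hmem
      have : T y = ‖y‖ • T u := by
        rw [hu, map_smul, smul_smul, mul_inv_cancel₀ hny, one_smul]
      rw [this, norm_smul, norm_norm]
      calc ‖y‖ * ‖T u‖ ≤ ‖y‖ * r := by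
            exact mul_le_mul_of_nonneg_left hTu (norm_nonneg y)
        _ = r * ‖y‖ := mul_comm _ _
  set p : EuclideanSpace ℝ (Fin n) := ↑(S.orthogonalProjection x) with hp
  have hpS : p ∈ S := (S.orthogonalProjection x).2
  have hTp : T p = p := (hS p).mp hpS
  have main : ∀ k : ℕ, ((fun z => T z)^[k] x - p) ∈ Sᗮ ∧
      ‖(fun z => T z)^[k] x - p‖ ≤ r ^ k * ‖x - p‖ := by
    intro k
    induction k with
    | zero =>
      refine ⟨?_, by simp⟩
      exact Submodule.sub_starProjection_mem_orthogonal (K := S) x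
    | succ k ih =>
      obtain ⟨ihm, ihb⟩ := ih
      have heq : (fun z => T z)^[k+1] x - p = T ((fun z => T z)^[k] x - p) := by
        rw [Function.iterate_succ_apply', map_sub, hTp]
      refine ⟨?_, ?_⟩
      · rw [heq]; exact hinv _ ihm
      · rw [heq]
        calc ‖T ((fun z => T z)^[k] x - p)‖ ≤ r * ‖(fun z => T z)^[k] x - p‖ :=
              hbd _ ihm
          _ ≤ r * (r ^ k * ‖x - p‖) := mul_le_mul_of_nonneg_left ihb hr0
          _ = r ^ (k+1) * ‖x - p‖ := by ring
  refine ⟨?_, fun k => (main k).2⟩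
  rw [tendsto_iff_norm_sub_tendsto_zero]
  have hlim : Filter.Tendsto (fun k : ℕ => r ^ k * ‖x - p‖) Filter.atTop (nhds 0) := by
    have := tendsto_pow_atTop_nhds_zero_of_lt_one hr0 hr1
    simpa using this.mul_const ‖x - p‖
  exact squeeze_zero (fun k => norm_nonneg _) (fun k => (main k).2) hlim
end

section
/- Let U_1,…,U_m be linear subspaces of ℝ^n with S := ⋂ U_i, let x ∈ ℝ^n, x^(i) := R_{U_i}⋯R_{U_1}(x), and W_x := aff{x, x^(1), …, x^(m)}. Then for every s ∈ S, the point p := P_{W_x}(s) is equidistant from x, x^(1), …, x^(m): ‖x − p‖ = ‖x^(i) − p‖ for all i. -/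
theorem stmt14 {n m : ℕ} (U : Fin m → Submodule ℝ (EuclideanSpace ℝ (Fin n)))
    (x : EuclideanSpace ℝ (Fin n))
    (y : Fin (m + 1) → EuclideanSpace ℝ (Fin n))
    (hy0 : y 0 = x)
    (hy : ∀ i : Fin m, y i.succ =
      (2 : ℝ) • (↑(Submodule.orthogonalProjection (U i) (y i.castSucc)) : EuclideanSpace ℝ (Fin n))
        - y i.castSucc)
    (s : EuclideanSpace ℝ (Fin n)) (hs : s ∈ ⨅ i, U i)
    (p : EuclideanSpace ℝ (Fin n))
    (hpW : p ∈ affineSpan ℝ (Set.range y))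
    (hp : ∀ w ∈ affineSpan ℝ (Set.range y), (inner ℝ (s - p) (w - p) : ℝ) = 0) :
    ∀ i : Fin (m + 1), ‖y i - p‖ = ‖x - p‖ := by
  have hsU : ∀ i, s ∈ U i := fun i => (Submodule.mem_iInf U).1 hs i
  have key : ∀ i : Fin (m + 1), ‖y i - s‖ = ‖x - s‖ := by
    intro i
    induction i using Fin.induction with
    | zero => rw [hy0]
    | succ i ih =>
      have hr : y i.succ = (U i).reflection (y i.castSucc) := by
        rw [hy i, Submodule.reflection_apply]; simp [two_smul]
      rw [hr]
      have hfix : ((U i).reflection) s = s :=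
        Submodule.reflection_mem_subspace_eq_self (hsU i)
      calc ‖((U i).reflection) (y i.castSucc) - s‖
          = ‖((U i).reflection) (y i.castSucc) - ((U i).reflection) s‖ := by rw [hfix]
        _ = ‖y i.castSucc - s‖ := by rw [← map_sub, ((U i).reflection).norm_map]
        _ = ‖x - s‖ := ih
  intro i
  have hyi : y i ∈ affineSpan ℝ (Set.range y) := subset_affineSpan ℝ _ ⟨i, rfl⟩
  have hx : x ∈ affineSpan ℝ (Set.range y) := hy0 ▸ subset_affineSpan ℝ _ ⟨0, rfl⟩
  have pyth : ∀ w ∈ affineSpan ℝ (Set.range y),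
      ‖w - s‖ ^ 2 = ‖w - p‖ ^ 2 + ‖s - p‖ ^ 2 := by
    intro w hw
    have h0 : (inner ℝ (w - p) (s - p) : ℝ) = 0 := by
      rw [real_inner_comm]; exact hp w hw
    have hws : w - s = (w - p) - (s - p) := by abel
    rw [hws, norm_sub_sq_real, h0]; ring
  have h1 := pyth _ hyi
  have h2 := pyth _ hx
  rw [key i] at h1
  have hsq : ‖y i - p‖ ^ 2 = ‖x - p‖ ^ 2 := by linarith
  exact (sq_eq_sq₀ (norm_nonneg _) (norm_nonneg _)).1 hsq
end

section
/- Let S be a closed subspace of ℝ^n and let x ∈ ℝ^n. Let W_x be a closed affine subspace with x ∈ W_x, and suppose c ∈ W_x satisfies c = P_{W_x}(s) for all s ∈ S. Then P_S(c) = P_S(x). -/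
theorem stmt16 {n : ℕ} (S : Submodule ℝ (EuclideanSpace ℝ (Fin n)))
    (W : AffineSubspace ℝ (EuclideanSpace ℝ (Fin n)))
    (x c : EuclideanSpace ℝ (Fin n)) (hxW : x ∈ W) (hcW : c ∈ W)
    (hc : ∀ s ∈ S, ∀ w ∈ W, (inner ℝ (s - c) (w - c) : ℝ) = 0) :
    S.orthogonalProjectionOnto c = S.orthogonalProjectionOnto x := by
  have hmem : x - c ∈ Sᗮ := by
    rw [Submodule.mem_orthogonal]
    intro u hu
    have h1 := hc u hu x hxW
    have h2 := hc 0 S.zero_mem x hxW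
    simp only [inner_sub_left, inner_zero_left] at h1 h2
    linarith
  have hzero : S.orthogonalProjectionOnto (x - c) = 0 :=
    Submodule.orthogonalProjectionOnto_apply_of_mem_orthogonal hmem
  have hsub : S.orthogonalProjectionOnto x - S.orthogonalProjectionOnto c = 0 := by
    rw [← map_sub]; exact hzero
  exact (sub_eq_zero.mp hsub).symm
end

section
/- Let U_1,…,U_m be linear subspaces of ℝ^n with S := ⋂ U_i, let C(x) denote the circumcenter (the projection of any s ∈ S onto W_x := aff{x, R_{U_1}x, …, R_{U_m}⋯R_{U_1}x}), and let A be the averaged operator (1/m)Σ A_i with A_1 = (1/2)(Id+P_{U_1}), A_i = (1/2)(Id+P_{U_i}R_{U_{i−1}}⋯R_{U_1}). Then ‖C(x) − P_S(x)‖ ≤ ‖A(x) − P_S(x)‖ for all x ∈ ℝ^n. -/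
theorem stmt17 {n m : ℕ} (hm : 0 < m)
    (U : Fin m → Submodule ℝ (EuclideanSpace ℝ (Fin n)))
    (x : EuclideanSpace ℝ (Fin n))
    (y : Fin (m + 1) → EuclideanSpace ℝ (Fin n))
    (hy0 : y 0 = x)
    (hy : ∀ i : Fin m, y i.succ =
      (2 : ℝ) • (↑(Submodule.orthogonalProjectionOnto (U i) (y i.castSucc)) : EuclideanSpace ℝ (Fin n))
        - y i.castSucc)
    (Ax : EuclideanSpace ℝ (Fin n))
    (hAx : Ax = (m : ℝ)⁻¹ • ∑ i : Fin m, (1 / 2 : ℝ) •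
      (x + (↑(Submodule.orthogonalProjectionOnto (U i) (y i.castSucc)) : EuclideanSpace ℝ (Fin n))))
    (Cx : EuclideanSpace ℝ (Fin n))
    (hCxW : Cx ∈ affineSpan ℝ (Set.range y))
    (hCx : ∀ w ∈ affineSpan ℝ (Set.range y),
      (inner ℝ ((↑(Submodule.orthogonalProjectionOnto (⨅ i, U i) x) : EuclideanSpace ℝ (Fin n)) - Cx)
        (w - Cx) : ℝ) = 0) :
    ‖Cx - ↑(Submodule.orthogonalProjectionOnto (⨅ i, U i) x)‖ ≤
      ‖Ax - ↑(Submodule.orthogonalProjectionOnto (⨅ i, U i) x)‖ := by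
  set p : EuclideanSpace ℝ (Fin n) :=
    (↑(Submodule.orthogonalProjectionOnto (⨅ i, U i) x) : EuclideanSpace ℝ (Fin n)) with hp
  have hm' : (m : ℝ) ≠ 0 := Nat.cast_ne_zero.mpr hm.ne'
  -- rewrite projections via hy
  have hP : ∀ i : Fin m,
      (↑(Submodule.orthogonalProjectionOnto (U i) (y i.castSucc)) : EuclideanSpace ℝ (Fin n)) =
        (1 / 2 : ℝ) • (y i.succ + y i.castSucc) := by
    intro i
    rw [hy i]
    module
  -- Ax - x belongs to the vector span
  have hx0 : x ∈ Set.range y := ⟨0, hy0⟩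
  have hxmem : x ∈ affineSpan ℝ (Set.range y) := mem_affineSpan ℝ hx0
  have key : Ax - x = (m : ℝ)⁻¹ • ∑ i : Fin m,
      ((1 / 4 : ℝ) • (y i.castSucc - x) + (1 / 4 : ℝ) • (y i.succ - x)) := by
    have hxx : (∑ _i : Fin m, x) = (m : ℝ) • x := by
      rw [Finset.sum_const, Finset.card_univ, Fintype.card_fin, ← Nat.cast_smul_eq_nsmul ℝ]
    have hsum : (∑ i : Fin m, (1 / 2 : ℝ) •
        (x + (↑(Submodule.orthogonalProjectionOnto (U i) (y i.castSucc)) : EuclideanSpace ℝ (Fin n)))) =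
        (∑ i : Fin m, ((1 / 4 : ℝ) • (y i.castSucc - x) + (1 / 4 : ℝ) • (y i.succ - x)))
          + (m : ℝ) • x := by
      rw [← hxx, ← Finset.sum_add_distrib]
      refine Finset.sum_congr rfl fun i _ => ?_
      rw [hP i]
      module
    rw [hAx, hsum, smul_add, smul_smul, inv_mul_cancel₀ hm', one_smul, add_sub_cancel_right]
  have hAxmem : Ax ∈ affineSpan ℝ (Set.range y) := by
    have hv : Ax - x ∈ (affineSpan ℝ (Set.range y)).direction := by
      rw [direction_affineSpan, key]
      refine Submodule.smul_mem _ _ (Submodule.sum_mem _ fun i _ => ?_)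
      refine Submodule.add_mem _ (Submodule.smul_mem _ _ ?_) (Submodule.smul_mem _ _ ?_)
      · exact vsub_mem_vectorSpan ℝ (Set.mem_range_self _) hx0
      · exact vsub_mem_vectorSpan ℝ (Set.mem_range_self _) hx0
    have := AffineSubspace.vadd_mem_of_mem_direction hv hxmem
    simpa using this
  have horth := hCx Ax hAxmem
  have hsq : ‖Ax - p‖ ^ 2 = ‖Ax - Cx‖ ^ 2 + ‖p - Cx‖ ^ 2 := by
    have h1 : Ax - p = (Ax - Cx) - (p - Cx) := by abel
    rw [h1, norm_sub_sq_real, real_inner_comm, horth]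
    ring
  have h2 : ‖Cx - p‖ = ‖p - Cx‖ := norm_sub_rev _ _
  nlinarith [norm_nonneg (Ax - p), norm_nonneg (Ax - Cx), norm_nonneg (p - Cx), hsq, h2]
end

section
/- With U_1,…,U_m linear subspaces of ℝ^n, S := ⋂ U_i, C the circumcenter operator, and r_A := sup{‖A y‖ : y ∈ S^⊥, ‖y‖=1} < 1 (where A is the associated averaged operator), it holds for all x that ‖C(x) − P_S(x)‖ ≤ r_A ‖x − P_S(x)‖ and P_S(C(x)) = P_S(x). -/
set_option maxHeartbeats 1000000 in
theorem stmt18 {n m : ℕ} (hm : 0 < m)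
    (U : Fin m → Submodule ℝ (EuclideanSpace ℝ (Fin n)))
    (comp : Fin (m + 1) → EuclideanSpace ℝ (Fin n) → EuclideanSpace ℝ (Fin n))
    (hcomp0 : ∀ z, comp 0 z = z)
    (hcompS : ∀ (i : Fin m) z, comp i.succ z =
      (2 : ℝ) • (↑(Submodule.orthogonalProjectionOnto (U i) (comp i.castSucc z)) : EuclideanSpace ℝ (Fin n))
        - comp i.castSucc z)
    (A : EuclideanSpace ℝ (Fin n) → EuclideanSpace ℝ (Fin n))
    (hA : ∀ z, A z = (m : ℝ)⁻¹ • ∑ i : Fin m, (1 / 2 : ℝ) •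
      (z + (↑(Submodule.orthogonalProjectionOnto (U i) (comp i.castSucc z)) : EuclideanSpace ℝ (Fin n))))
    (S : Submodule ℝ (EuclideanSpace ℝ (Fin n))) (hS : S = ⨅ i, U i)
    (rA : ℝ) (hrA : rA = sSup ((fun y => ‖A y‖) '' {y | y ∈ Sᗮ ∧ ‖y‖ = 1}))
    (x : EuclideanSpace ℝ (Fin n))
    (Cx : EuclideanSpace ℝ (Fin n))
    (hCxW : Cx ∈ affineSpan ℝ (Set.range fun i : Fin (m + 1) => comp i x))
    (hCx : ∀ s ∈ S, ∀ w ∈ affineSpan ℝ (Set.range fun i : Fin (m + 1) => comp i x),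
      (inner ℝ (s - Cx) (w - Cx) : ℝ) = 0) :
    ‖Cx - ↑(Submodule.orthogonalProjectionOnto S x)‖ ≤ rA * ‖x - ↑(Submodule.orthogonalProjectionOnto S x)‖ ∧
      Submodule.orthogonalProjectionOnto S Cx = Submodule.orthogonalProjectionOnto S x := by
  set p : EuclideanSpace ℝ (Fin n) := ↑(Submodule.orthogonalProjectionOnto S x) with hp_def
  have hp : p ∈ S := SetLike.coe_mem _
  have hxp : x - p ∈ Sᗮ := Submodule.sub_starProjection_mem_orthogonal x
  set W := affineSpan ℝ (Set.range fun i : Fin (m + 1) => comp i x) with hW_def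
  -- comp is additive
  have hcadd : ∀ i : Fin (m + 1), ∀ z w, comp i (z + w) = comp i z + comp i w := by
    intro i
    induction i using Fin.induction with
    | zero => intro z w; simp [hcomp0]
    | succ i ih =>
      intro z w
      rw [hcompS, hcompS, hcompS, ih, map_add]
      push_cast
      module
  -- comp is homogeneous
  have hcsmul : ∀ i : Fin (m + 1), ∀ (c : ℝ) z, comp i (c • z) = c • comp i z := by
    intro i
    induction i using Fin.induction with
    | zero => intro c z; simp [hcomp0]
    | succ i ih =>
      intro c z
      rw [hcompS, hcompS, ih, map_smul]
      push_cast
      module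
  -- membership of S in each U i
  have hSU : ∀ (i : Fin m) {s : EuclideanSpace ℝ (Fin n)}, s ∈ S → s ∈ U i := by
    intro i s hs
    rw [hS] at hs
    exact (Submodule.mem_iInf U).mp hs i
  -- comp fixes S
  have hcfix : ∀ i : Fin (m + 1), ∀ s ∈ S, comp i s = s := by
    intro i
    induction i using Fin.induction with
    | zero => intro s _; exact hcomp0 s
    | succ i ih =>
      intro s hs
      rw [hcompS, ih s hs, (id (Submodule.starProjection_eq_self_iff.mpr (hSU i hs)) : (↑(Submodule.orthogonalProjectionOnto (U i) s) : EuclideanSpace ℝ (Fin n)) = s)]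
      module
  -- projections preserve Sᗮ
  have hPorth : ∀ (i : Fin m) {y : EuclideanSpace ℝ (Fin n)}, y ∈ Sᗮ →
      (↑(Submodule.orthogonalProjectionOnto (U i) y) : EuclideanSpace ℝ (Fin n)) ∈ Sᗮ := by
    intro i y hy
    rw [Submodule.mem_orthogonal]
    intro s hs
    have h1 : (inner ℝ (↑(Submodule.orthogonalProjectionOnto (U i) s) : EuclideanSpace ℝ (Fin n)) y : ℝ)
        = inner ℝ s (↑(Submodule.orthogonalProjectionOnto (U i) y) : EuclideanSpace ℝ (Fin n)) :=
      Submodule.inner_starProjection_left_eq_right (U i) s y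
    rw [(id (Submodule.starProjection_eq_self_iff.mpr (hSU i hs)) : (↑(Submodule.orthogonalProjectionOnto (U i) s) : EuclideanSpace ℝ (Fin n)) = s)] at h1
    rw [← h1]
    exact (Submodule.mem_orthogonal S y).mp hy s hs
  -- comp preserves Sᗮ
  have hcorth : ∀ i : Fin (m + 1), ∀ y ∈ Sᗮ, comp i y ∈ Sᗮ := by
    intro i
    induction i using Fin.induction with
    | zero => intro y hy; rw [hcomp0]; exact hy
    | succ i ih =>
      intro y hy
      rw [hcompS]
      exact Submodule.sub_mem _ (Submodule.smul_mem _ _ (hPorth i (ih y hy))) (ih y hy)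
  -- A is additive
  have hAadd : ∀ z w, A (z + w) = A z + A w := by
    intro z w
    rw [hA, hA, hA, ← smul_add, ← Finset.sum_add_distrib]
    congr 1
    refine Finset.sum_congr rfl fun i _ => ?_
    rw [hcadd, map_add]
    push_cast
    module
  -- A is homogeneous
  have hAsmul : ∀ (c : ℝ) z, A (c • z) = c • A z := by
    intro c z
    rw [hA, hA]
    have hterm : ∀ i : Fin m, (1 / 2 : ℝ) •
        (c • z + (↑(Submodule.orthogonalProjectionOnto (U i) (comp i.castSucc (c • z))) :
          EuclideanSpace ℝ (Fin n)))
        = c • ((1 / 2 : ℝ) • (z + (↑(Submodule.orthogonalProjectionOnto (U i) (comp i.castSucc z)) :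
          EuclideanSpace ℝ (Fin n)))) := by
      intro i
      rw [hcsmul, map_smul]
      push_cast
      module
    rw [Finset.sum_congr rfl fun i _ => hterm i, ← Finset.smul_sum, smul_comm]
  have hA0 : A 0 = 0 := by
    have h := hAadd 0 0
    rw [add_zero] at h
    exact add_eq_right.mp h.symm
  -- A fixes S
  have hAfix : ∀ s ∈ S, A s = s := by
    intro s hs
    rw [hA]
    have : ∀ i : Fin m, (1 / 2 : ℝ) •
        (s + (↑(Submodule.orthogonalProjectionOnto (U i) (comp i.castSucc s)) : EuclideanSpace ℝ (Fin n))) = s := by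
      intro i
      rw [hcfix _ s hs, (id (Submodule.starProjection_eq_self_iff.mpr (hSU i hs)) : (↑(Submodule.orthogonalProjectionOnto (U i) s) : EuclideanSpace ℝ (Fin n)) = s)]
      module
    rw [Finset.sum_congr rfl fun i _ => this i, Finset.sum_const, Finset.card_univ,
      Fintype.card_fin, ← Nat.cast_smul_eq_nsmul ℝ, smul_smul,
      inv_mul_cancel₀ (by exact_mod_cast hm.ne' : (m : ℝ) ≠ 0), one_smul]
  -- A preserves Sᗮ
  have hAorth : ∀ y ∈ Sᗮ, A y ∈ Sᗮ := by
    intro y hy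
    rw [hA]
    refine Submodule.smul_mem _ _ (Submodule.sum_mem _ fun i _ => Submodule.smul_mem _ _ ?_)
    exact Submodule.add_mem _ hy (hPorth i (hcorth _ y hy))
  -- projection formula from hcompS
  have hP2 : ∀ (i : Fin m) z, (↑(Submodule.orthogonalProjectionOnto (U i) (comp i.castSucc z)) : EuclideanSpace ℝ (Fin n))
      = (1 / 2 : ℝ) • (comp i.succ z + comp i.castSucc z) := by
    intro i z
    have h := hcompS i z
    have : (2 : ℝ) • (↑(Submodule.orthogonalProjectionOnto (U i) (comp i.castSucc z)) : EuclideanSpace ℝ (Fin n))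
        = comp i.succ z + comp i.castSucc z := by
      rw [h]; module
    calc (↑(Submodule.orthogonalProjectionOnto (U i) (comp i.castSucc z)) : EuclideanSpace ℝ (Fin n))
        = (1 / 2 : ℝ) • ((2 : ℝ) • (↑(Submodule.orthogonalProjectionOnto (U i) (comp i.castSucc z)) : EuclideanSpace ℝ (Fin n))) := by
          module
      _ = (1 / 2 : ℝ) • (comp i.succ z + comp i.castSucc z) := by rw [this]
  -- points comp i x are in W
  have hptsW : ∀ i : Fin (m + 1), comp i x ∈ W :=
    fun i => subset_affineSpan ℝ _ ⟨i, rfl⟩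
  have hxW : x ∈ W := by rw [← hcomp0 x]; exact hptsW 0
  -- A x ∈ W
  have hkey : A x - x = (m : ℝ)⁻¹ • ∑ i : Fin m,
      ((1 / 4 : ℝ) • (comp i.succ x - x) + (1 / 4 : ℝ) • (comp i.castSucc x - x)) := by
    rw [hA]
    have hterm : ∀ i : Fin m, (1 / 2 : ℝ) •
        (x + (↑(Submodule.orthogonalProjectionOnto (U i) (comp i.castSucc x)) : EuclideanSpace ℝ (Fin n)))
        = ((1 / 4 : ℝ) • (comp i.succ x - x) + (1 / 4 : ℝ) • (comp i.castSucc x - x)) + x := by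
      intro i
      rw [hP2]
      module
    rw [Finset.sum_congr rfl fun i _ => hterm i, Finset.sum_add_distrib, Finset.sum_const,
      Finset.card_univ, Fintype.card_fin, smul_add, ← Nat.cast_smul_eq_nsmul ℝ, smul_smul,
      inv_mul_cancel₀ (by exact_mod_cast hm.ne' : (m : ℝ) ≠ 0), one_smul]
    abel
  have hAxW : A x ∈ W := by
    have hdir : A x - x ∈ W.direction := by
      rw [hkey]
      refine Submodule.smul_mem _ _ (Submodule.sum_mem _ fun i _ => Submodule.add_mem _
        (Submodule.smul_mem _ _ ?_) (Submodule.smul_mem _ _ ?_))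
      · have := AffineSubspace.vsub_mem_direction (hptsW i.succ) hxW
        simpa using this
      · have := AffineSubspace.vsub_mem_direction (hptsW i.castSucc) hxW
        simpa using this
    have : A x = (A x - x) +ᵥ x := by simp
    rw [this]
    exact AffineSubspace.vadd_mem_of_mem_direction hdir hxW
  -- bound : for y ∈ Sᗮ, ‖A y‖ ≤ rA * ‖y‖
  have hbound : ∀ y ∈ Sᗮ, ‖A y‖ ≤ rA * ‖y‖ := by
    intro y hy
    by_cases hy0 : y = 0
    · simp [hy0, hA0]
    · set Alin : EuclideanSpace ℝ (Fin n) →ₗ[ℝ] EuclideanSpace ℝ (Fin n) :=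
        { toFun := A, map_add' := hAadd, map_smul' := hAsmul } with hAlin
      set Ac := LinearMap.toContinuousLinearMap Alin with hAc
      have hbdd : BddAbove ((fun y => ‖A y‖) '' {y | y ∈ Sᗮ ∧ ‖y‖ = 1}) := by
        refine ⟨‖Ac‖, ?_⟩
        rintro _ ⟨z, ⟨_, hz1⟩, rfl⟩
        show ‖A z‖ ≤ ‖Ac‖
        calc ‖A z‖ = ‖Ac z‖ := rfl
          _ ≤ ‖Ac‖ * ‖z‖ := Ac.le_opNorm z
          _ = ‖Ac‖ := by rw [hz1, mul_one]
      set u : EuclideanSpace ℝ (Fin n) := ‖y‖⁻¹ • y with hu_def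
      have hu1 : ‖u‖ = 1 := by
        rw [hu_def, norm_smul, norm_inv, norm_norm,
          inv_mul_cancel₀ (norm_ne_zero_iff.mpr hy0)]
      have huS : u ∈ Sᗮ := Submodule.smul_mem _ _ hy
      have hmem : ‖A u‖ ∈ (fun y => ‖A y‖) '' {y | y ∈ Sᗮ ∧ ‖y‖ = 1} :=
        ⟨u, ⟨huS, hu1⟩, rfl⟩
      have hle : ‖A u‖ ≤ rA := hrA ▸ le_csSup hbdd hmem
      have hyu : y = ‖y‖ • u := by
        rw [hu_def, smul_smul, mul_inv_cancel₀ (norm_ne_zero_iff.mpr hy0), one_smul]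
      calc ‖A y‖ = ‖A (‖y‖ • u)‖ := by rw [← hyu]
        _ = ‖y‖ * ‖A u‖ := by
            rw [hAsmul, norm_smul, norm_norm]
        _ ≤ ‖y‖ * rA := mul_le_mul_of_nonneg_left hle (norm_nonneg y)
        _ = rA * ‖y‖ := mul_comm _ _
  -- pythagoras: ‖Cx - p‖ ≤ ‖A x - p‖
  have hpyth : ‖Cx - p‖ ≤ ‖A x - p‖ := by
    have hperp := hCx p hp (A x) hAxW
    have hsplit : A x - p = (A x - Cx) + (Cx - p) := by abel
    have hinner : (inner ℝ (A x - Cx) (Cx - p) : ℝ) = 0 := by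
      have : (inner ℝ (A x - Cx) (Cx - p) : ℝ) = -(inner ℝ (p - Cx) (A x - Cx) : ℝ) := by
        rw [real_inner_comm]
        have : Cx - p = -(p - Cx) := by abel
        rw [this, inner_neg_left]
      rw [this, hperp, neg_zero]
    have h2 : ‖A x - p‖ ^ 2 = ‖A x - Cx‖ ^ 2 + ‖Cx - p‖ ^ 2 := by
      rw [hsplit, norm_add_sq_real, hinner]
      ring
    nlinarith [norm_nonneg (A x - p), norm_nonneg (Cx - p), sq_nonneg (‖A x - Cx‖)]
  have hAxp : A x - p = A (x - p) := by
    have h1 : x - p = x + (-1 : ℝ) • p := by module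
    rw [h1, hAadd, hAsmul, hAfix p hp]
    module
  constructor
  · calc ‖Cx - p‖ ≤ ‖A x - p‖ := hpyth
      _ = ‖A (x - p)‖ := by rw [hAxp]
      _ ≤ rA * ‖x - p‖ := hbound _ hxp
  · -- second part
    have hcompx : ∀ i : Fin (m + 1), comp i x - p ∈ Sᗮ := by
      intro i
      have hx : x = p + (x - p) := by abel
      have : comp i x = p + comp i (x - p) := by
        conv_lhs => rw [hx]
        rw [hcadd, hcfix i p hp]
      rw [this]
      simpa using hcorth i (x - p) hxp
    have hdirle : W.direction ≤ Sᗮ := by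
      rw [hW_def, direction_affineSpan, vectorSpan_def]
      rw [Submodule.span_le]
      rintro _ ⟨a, ⟨i, rfl⟩, b, ⟨j, rfl⟩, rfl⟩
      have h2 : comp i x - comp j x ∈ Sᗮ := by
        have h3 := Submodule.sub_mem Sᗮ (hcompx i) (hcompx j)
        have h4 : (comp i x - p) - (comp j x - p) = comp i x - comp j x := by abel
        rwa [h4] at h3
      simpa [vsub_eq_sub] using h2
    have hCxp : Cx - p ∈ Sᗮ := by
      have h1 : Cx - x ∈ Sᗮ := by
        have := AffineSubspace.vsub_mem_direction hCxW hxW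
        exact hdirle (by simpa using this)
      have : Cx - p = (Cx - x) + (x - p) := by abel
      rw [this]
      exact Submodule.add_mem _ h1 hxp
    exact Subtype.ext (Submodule.eq_starProjection_of_mem_orthogonal hp hCxp)
end

section
/- With U_1,…,U_m linear subspaces of ℝ^n, S := ⋂ U_i, and C the circumcenter operator, for every x ∈ ℝ^n the sequence C^k(x) converges to P_S(x) linearly: ‖C^k(x) − P_S(x)‖ ≤ r_A^k ‖x − P_S(x)‖ for all k ∈ ℕ, where r_A := sup{‖A y‖ : y ∈ S^⊥, ‖y‖ = 1} ∈ [0,1). -/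
set_option maxHeartbeats 1000000 in
theorem stmt19 {n m : ℕ} (hm : 0 < m)
    (U : Fin m → Submodule ℝ (EuclideanSpace ℝ (Fin n)))
    (comp : Fin (m + 1) → EuclideanSpace ℝ (Fin n) → EuclideanSpace ℝ (Fin n))
    (hcomp0 : ∀ z, comp 0 z = z)
    (hcompS : ∀ (i : Fin m) z, comp i.succ z =
      (2 : ℝ) • (↑(Submodule.orthogonalProjectionOnto (U i) (comp i.castSucc z)) : EuclideanSpace ℝ (Fin n))
        - comp i.castSucc z)
    (A : EuclideanSpace ℝ (Fin n) → EuclideanSpace ℝ (Fin n))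
    (hA : ∀ z, A z = (m : ℝ)⁻¹ • ∑ i : Fin m, (1 / 2 : ℝ) •
      (z + (↑(Submodule.orthogonalProjectionOnto (U i) (comp i.castSucc z)) : EuclideanSpace ℝ (Fin n))))
    (S : Submodule ℝ (EuclideanSpace ℝ (Fin n))) (hS : S = ⨅ i, U i)
    (rA : ℝ) (hrA : rA = sSup ((fun y => ‖A y‖) '' {y | y ∈ Sᗮ ∧ ‖y‖ = 1}))
    (C : EuclideanSpace ℝ (Fin n) → EuclideanSpace ℝ (Fin n))
    (hCW : ∀ z, C z ∈ affineSpan ℝ (Set.range fun i : Fin (m + 1) => comp i z))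
    (hC : ∀ z, ∀ s ∈ S, ∀ w ∈ affineSpan ℝ (Set.range fun i : Fin (m + 1) => comp i z),
      (inner ℝ (s - C z) (w - C z) : ℝ) = 0)
    (x : EuclideanSpace ℝ (Fin n)) :
    0 ≤ rA ∧ rA < 1 ∧
      Filter.Tendsto (fun k => C^[k] x) Filter.atTop
        (nhds (↑(Submodule.orthogonalProjectionOnto S x))) ∧
      ∀ k : ℕ, ‖C^[k] x - ↑(Submodule.orthogonalProjectionOnto S x)‖ ≤
        rA ^ k * ‖x - ↑(Submodule.orthogonalProjectionOnto S x)‖ := by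
  classical
  have hSU : ∀ i, S ≤ U i := fun i => hS ▸ iInf_le U i
  have hmR : (m : ℝ) ≠ 0 := Nat.cast_ne_zero.mpr hm.ne'
  -- comp via Submodule.reflections
  have hcompR : ∀ (i : Fin m) z, comp i.succ z = Submodule.reflection (U i) (comp i.castSucc z) := by
    intro i z
    rw [hcompS, Submodule.reflection_apply, Submodule.starProjection_apply, two_smul ℝ, two_smul ℕ]
  -- comp preserves norm
  have hcompNorm : ∀ (i : Fin (m + 1)) z, ‖comp i z‖ = ‖z‖ := by
    intro i
    induction i using Fin.induction with
    | zero => intro z; rw [hcomp0]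
    | succ i ih => intro z; rw [hcompR, (Submodule.reflection (U i)).norm_map, ih]
  -- comp is linear
  have hcompAdd : ∀ (i : Fin (m + 1)) z w, comp i (z + w) = comp i z + comp i w := by
    intro i
    induction i using Fin.induction with
    | zero => intro z w; simp [hcomp0]
    | succ i ih => intro z w; rw [hcompR, hcompR, hcompR, ih, map_add]
  have hcompSmul : ∀ (i : Fin (m + 1)) (c : ℝ) z, comp i (c • z) = c • comp i z := by
    intro i
    induction i using Fin.induction with
    | zero => intro c z; simp [hcomp0]
    | succ i ih => intro c z; rw [hcompR, hcompR, ih, map_smul]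
  -- comp fixes S
  have hcompFix : ∀ (i : Fin (m + 1)) s, s ∈ S → comp i s = s := by
    intro i
    induction i using Fin.induction with
    | zero => intro s hs; exact hcomp0 s
    | succ i ih =>
      intro s hs
      rw [hcompR, ih s hs, Submodule.reflection_mem_subspace_eq_self (hSU i hs)]
  -- A is linear
  have hAadd : ∀ z w, A (z + w) = A z + A w := by
    intro z w
    simp only [hA, hcompAdd, map_add, Submodule.coe_add, ← Finset.sum_add_distrib, ← smul_add]
    congr 1
    apply Finset.sum_congr rfl
    intro i _
    congr 1
    abel
  have hAsmul : ∀ (c : ℝ) z, A (c • z) = c • A z := by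
    intro c z
    rw [hA, hA, smul_comm c ((m : ℝ)⁻¹)]
    congr 1
    rw [Finset.smul_sum]
    apply Finset.sum_congr rfl
    intro i _
    rw [hcompSmul, map_smul, Submodule.coe_smul, ← smul_add c, smul_comm]
  have Alin : ∃ T : EuclideanSpace ℝ (Fin n) →ₗ[ℝ] EuclideanSpace ℝ (Fin n), ∀ z, T z = A z :=
    ⟨{ toFun := A, map_add' := hAadd, map_smul' := hAsmul }, fun z => rfl⟩
  obtain ⟨T, hT⟩ := Alin
  have hAcont : Continuous A := by
    have := T.continuous_of_finiteDimensional
    simpa [funext hT] using this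
  -- A fixes S
  have hAfix : ∀ s ∈ S, A s = s := by
    intro s hs
    rw [hA]
    have h1 : ∀ i : Fin m, (1 / 2 : ℝ) •
        (s + (↑(Submodule.orthogonalProjectionOnto (U i) (comp i.castSucc s)) : EuclideanSpace ℝ (Fin n))) = s := by
      intro i
      rw [hcompFix _ s hs, ← Submodule.starProjection_apply, Submodule.starProjection_eq_self_iff.mpr (hSU i hs)]
      rw [← two_smul ℝ, smul_smul]
      norm_num
    rw [Finset.sum_congr rfl fun i _ => h1 i, Finset.sum_const, Finset.card_univ,
      Fintype.card_fin, ← Nat.cast_smul_eq_nsmul ℝ, smul_smul, inv_mul_cancel₀ hmR, one_smul]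
  -- norm of each projection term
  have hPnorm : ∀ (i : Fin m) z,
      ‖(↑(Submodule.orthogonalProjectionOnto (U i) (comp i.castSucc z)) : EuclideanSpace ℝ (Fin n))‖ ≤ ‖z‖ := by
    intro i z
    calc ‖(↑(Submodule.orthogonalProjectionOnto (U i) (comp i.castSucc z)) : EuclideanSpace ℝ (Fin n))‖
        ≤ ‖comp i.castSucc z‖ := by
          have h1 := (Submodule.orthogonalProjectionOnto (U i)).le_opNorm (comp i.castSucc z)
          have h2 := Submodule.orthogonalProjectionOnto_norm_le (U i)
          have h3 : ‖((Submodule.orthogonalProjectionOnto (U i)) (comp i.castSucc z) :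
              EuclideanSpace ℝ (Fin n))‖ = ‖(Submodule.orthogonalProjectionOnto (U i)) (comp i.castSucc z)‖ := rfl
          rw [h3]
          nlinarith [norm_nonneg (comp i.castSucc z)]
      _ = ‖z‖ := hcompNorm _ z
  -- A is nonexpansive
  have hAle : ∀ z, ‖A z‖ ≤ ‖z‖ := by
    intro z
    rw [hA, norm_smul]
    have h1 : ‖∑ i : Fin m, (1 / 2 : ℝ) •
        (z + (↑(Submodule.orthogonalProjectionOnto (U i) (comp i.castSucc z)) : EuclideanSpace ℝ (Fin n)))‖
        ≤ (m : ℝ) * ‖z‖ := by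
      calc _ ≤ ∑ i : Fin m, ‖(1 / 2 : ℝ) •
            (z + (↑(Submodule.orthogonalProjectionOnto (U i) (comp i.castSucc z)) : EuclideanSpace ℝ (Fin n)))‖ :=
            norm_sum_le _ _
        _ ≤ ∑ _i : Fin m, ‖z‖ := by
            apply Finset.sum_le_sum
            intro i _
            rw [norm_smul]
            have := norm_add_le z
              (↑(Submodule.orthogonalProjectionOnto (U i) (comp i.castSucc z)) : EuclideanSpace ℝ (Fin n))
            have h2 := hPnorm i z
            have h4 : ‖(1 / 2 : ℝ)‖ = 1 / 2 := by
              rw [Real.norm_eq_abs]; norm_num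
            rw [h4]
            linarith
        _ = (m : ℝ) * ‖z‖ := by rw [Finset.sum_const, Finset.card_univ, Fintype.card_fin,
            nsmul_eq_mul]
    calc ‖(m : ℝ)⁻¹‖ * ‖∑ i : Fin m, (1 / 2 : ℝ) •
          (z + (↑(Submodule.orthogonalProjectionOnto (U i) (comp i.castSucc z)) : EuclideanSpace ℝ (Fin n)))‖
        ≤ (m : ℝ)⁻¹ * ((m : ℝ) * ‖z‖) := by
          rw [Real.norm_eq_abs, abs_of_nonneg (by positivity)]
          exact mul_le_mul_of_nonneg_left h1 (by positivity)
      _ = ‖z‖ := by field_simp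
  -- strictness: on the unit sphere of Sᗮ, A is a strict contraction
  have hAlt : ∀ y : EuclideanSpace ℝ (Fin n), y ∈ Sᗮ → ‖y‖ = 1 → ‖A y‖ < 1 := by
    intro y hy hy1
    rcases lt_or_ge ‖A y‖ 1 with h | h
    · exact h
    exfalso
    have hAy : ‖A y‖ = 1 := le_antisymm (by rw [← hy1]; exact hAle y) h
    set t : Fin m → ℝ := fun i =>
      ‖y + (↑(Submodule.orthogonalProjectionOnto (U i) (comp i.castSucc y)) : EuclideanSpace ℝ (Fin n))‖ with ht
    have ht2 : ∀ i, t i ≤ 2 := by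
      intro i
      have h1 := norm_add_le y
        (↑(Submodule.orthogonalProjectionOnto (U i) (comp i.castSucc y)) : EuclideanSpace ℝ (Fin n))
      have h2 := hPnorm i y
      rw [hy1] at h1 h2
      simp only [ht]; linarith
    have htsum : 2 * (m : ℝ) ≤ ∑ i, t i := by
      have h1 : ‖A y‖ ≤ (m : ℝ)⁻¹ * ∑ i, (1 / 2 : ℝ) * t i := by
        rw [hA, norm_smul, Real.norm_eq_abs, abs_of_nonneg (by positivity : (0:ℝ) ≤ (m:ℝ)⁻¹)]
        apply mul_le_mul_of_nonneg_left _ (by positivity)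
        calc ‖∑ i : Fin m, (1 / 2 : ℝ) •
              (y + (↑(Submodule.orthogonalProjectionOnto (U i) (comp i.castSucc y)) :
                EuclideanSpace ℝ (Fin n)))‖
            ≤ ∑ i : Fin m, ‖(1 / 2 : ℝ) •
              (y + (↑(Submodule.orthogonalProjectionOnto (U i) (comp i.castSucc y)) :
                EuclideanSpace ℝ (Fin n)))‖ := norm_sum_le _ _
          _ = ∑ i, (1 / 2 : ℝ) * t i := by
              apply Finset.sum_congr rfl
              intro i _
              rw [norm_smul, Real.norm_eq_abs, abs_of_nonneg (by norm_num : (0:ℝ) ≤ 1/2)]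
      rw [hAy] at h1
      have h2 : (m : ℝ) ≤ (1 / 2 : ℝ) * ∑ i, t i := by
        rw [← Finset.mul_sum] at h1
        have hmpos : (0:ℝ) < (m:ℝ) := by positivity
        calc (m : ℝ) = (m : ℝ) * 1 := (mul_one _).symm
          _ ≤ (m : ℝ) * ((m : ℝ)⁻¹ * ((1/2 : ℝ) * ∑ i, t i)) :=
              mul_le_mul_of_nonneg_left h1 (by positivity)
          _ = (1 / 2 : ℝ) * ∑ i, t i := by field_simp
      linarith
    have hteq : ∀ i, t i = 2 := by
      intro i
      refine le_antisymm (ht2 i) ?_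
      have h1 : ∑ j ∈ Finset.univ.erase i, t j ≤ 2 * ((m : ℝ) - 1) := by
        calc ∑ j ∈ Finset.univ.erase i, t j ≤ ∑ _j ∈ Finset.univ.erase i, (2:ℝ) :=
            Finset.sum_le_sum fun j _ => ht2 j
          _ = 2 * ((m : ℝ) - 1) := by
            rw [Finset.sum_const, Finset.card_erase_of_mem (Finset.mem_univ i),
              Finset.card_univ, Fintype.card_fin, nsmul_eq_mul]
            have : (1:ℕ) ≤ m := hm
            push_cast [Nat.cast_sub this]
            ring
      have h2 : ∑ j, t j = t i + ∑ j ∈ Finset.univ.erase i, t j :=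
        (Finset.add_sum_erase Finset.univ t (Finset.mem_univ i)).symm
      linarith only [htsum, h1, h2]
    -- comp fixes y as long as y belongs to the previous subspaces
    have hfixed : ∀ i : Fin (m + 1), (∀ j : Fin m, (j : ℕ) < (i : ℕ) → y ∈ U j) →
        comp i y = y := by
      intro i
      induction i using Fin.induction with
      | zero => intro _; exact hcomp0 y
      | succ i ih =>
        intro hyp
        have h1 : comp i.castSucc y = y := ih fun j hj => hyp j (by
          simp only [Fin.coe_castSucc] at hj
          simp only [Fin.val_succ]
          omega)
        have h2 : y ∈ U i := hyp i (by simp only [Fin.val_succ]; omega)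
        rw [hcompR, h1]
        exact Submodule.reflection_mem_subspace_eq_self h2
    have claim : ∀ i : Fin (m + 1), ∀ j : Fin m, (j : ℕ) < (i : ℕ) → y ∈ U j := by
      intro i
      induction i using Fin.induction with
      | zero => intro j hj; simp at hj
      | succ i ih =>
        intro j hj
        simp only [Fin.val_succ] at hj
        rcases lt_or_eq_of_le (Nat.lt_succ_iff.mp hj) with hlt | heq
        · exact ih j hlt
        · have hji : j = i := Fin.ext heq
          subst hji
          have hcy : comp j.castSucc y = y := hfixed j.castSucc fun k hk => ih k (by
            simpa using hk)
          have h4 : ‖y + (↑(Submodule.orthogonalProjectionOnto (U j) y) : EuclideanSpace ℝ (Fin n))‖ = 2 := by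
            have h4' : ‖y + (↑(Submodule.orthogonalProjectionOnto (U j) (comp j.castSucc y)) :
                EuclideanSpace ℝ (Fin n))‖ = 2 := hteq j
            rwa [hcy] at h4'
          set p := (↑(Submodule.orthogonalProjectionOnto (U j) y) : EuclideanSpace ℝ (Fin n)) with hp
          have hip : (inner ℝ y p : ℝ) = ‖p‖ ^ 2 := by
            have h0 : (inner ℝ (y - p) p : ℝ) = 0 :=
              Submodule.starProjection_inner_eq_zero y p (Submodule.coe_mem _)
            rw [inner_sub_left, real_inner_self_eq_norm_sq] at h0
            linarith
          have h2 : ‖y + p‖ ^ 2 = 1 + 3 * ‖p‖ ^ 2 := by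
            rw [norm_add_sq_real, hip, hy1]; ring
          have hp1 : ‖p‖ ^ 2 = 1 := by
            rw [h4] at h2; nlinarith
          have h5 : ‖y - p‖ ^ 2 = 0 := by
            rw [norm_sub_sq_real, hip, hy1, hp1]; ring
          have h6 : y = p := by
            have := (norm_eq_zero.mp (pow_eq_zero_iff (n := 2) (by norm_num) |>.mp h5))
            rw [sub_eq_zero] at this
            exact this
          rw [h6]
          exact Submodule.coe_mem _
    have hyS : y ∈ S := by
      rw [hS, Submodule.mem_iInf]
      intro j
      exact claim (Fin.last m) j (by simpa using j.isLt)
    have : (inner ℝ y y : ℝ) = 0 := hy y hyS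
    rw [inner_self_eq_zero] at this
    rw [this] at hy1
    simp at hy1
  -- rA facts
  have hbdd : BddAbove ((fun y => ‖A y‖) '' {y | y ∈ Sᗮ ∧ ‖y‖ = 1}) := by
    refine ⟨1, ?_⟩
    rintro r ⟨y, ⟨hy, hy1⟩, rfl⟩
    calc ‖A y‖ ≤ ‖y‖ := hAle y
      _ = 1 := hy1
  have hrA0 : 0 ≤ rA := by
    rcases Set.eq_empty_or_nonempty {y : EuclideanSpace ℝ (Fin n) | y ∈ Sᗮ ∧ ‖y‖ = 1} with
      he | ⟨y, hy⟩
    · rw [hrA, he, Set.image_empty, Real.sSup_empty]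
    · rw [hrA]
      exact le_csSup_of_le hbdd ⟨y, hy, rfl⟩ (norm_nonneg _)
  have hrAb : ∀ y ∈ Sᗮ, ‖A y‖ ≤ rA * ‖y‖ := by
    intro y hy
    rcases eq_or_ne y 0 with rfl | h0
    · have hA0 : A 0 = 0 := by simpa using hAsmul 0 0
      simp [hA0]
    · have hny : ‖y‖ ≠ 0 := norm_ne_zero_iff.mpr h0
      have hmem : ‖y‖⁻¹ • y ∈ {y : EuclideanSpace ℝ (Fin n) | y ∈ Sᗮ ∧ ‖y‖ = 1} := by
        refine ⟨Submodule.smul_mem _ _ hy, ?_⟩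
        rw [norm_smul, Real.norm_eq_abs, abs_of_nonneg (inv_nonneg.mpr (norm_nonneg y))]
        field_simp
      have hle : ‖A (‖y‖⁻¹ • y)‖ ≤ rA := by
        rw [hrA]
        exact le_csSup hbdd ⟨_, hmem, rfl⟩
      rw [hAsmul, norm_smul, Real.norm_eq_abs,
        abs_of_nonneg (inv_nonneg.mpr (norm_nonneg y))] at hle
      calc ‖A y‖ = ‖y‖ * (‖y‖⁻¹ * ‖A y‖) := by field_simp
        _ ≤ ‖y‖ * rA := mul_le_mul_of_nonneg_left hle (norm_nonneg y)
        _ = rA * ‖y‖ := mul_comm _ _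
  have hrA1 : rA < 1 := by
    rcases Set.eq_empty_or_nonempty {y : EuclideanSpace ℝ (Fin n) | y ∈ Sᗮ ∧ ‖y‖ = 1} with
      he | hne
    · rw [hrA, he, Set.image_empty, Real.sSup_empty]; norm_num
    · have hcl : IsClosed {y : EuclideanSpace ℝ (Fin n) | y ∈ Sᗮ ∧ ‖y‖ = 1} := by
        rw [Set.setOf_and]
        exact (Submodule.closed_of_finiteDimensional Sᗮ).inter
          (isClosed_eq continuous_norm continuous_const)
      have hbddS : Bornology.IsBounded {y : EuclideanSpace ℝ (Fin n) | y ∈ Sᗮ ∧ ‖y‖ = 1} := by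
        apply Metric.isBounded_closedBall (x := (0 : EuclideanSpace ℝ (Fin n))) (r := 1) |>.subset
        intro y hy
        rw [Metric.mem_closedBall, dist_zero_right, hy.2]
      have hDc : IsCompact {y : EuclideanSpace ℝ (Fin n) | y ∈ Sᗮ ∧ ‖y‖ = 1} :=
        Metric.isCompact_of_isClosed_isBounded hcl hbddS
      have himc : IsCompact ((fun y => ‖A y‖) '' {y | y ∈ Sᗮ ∧ ‖y‖ = 1}) :=
        hDc.image hAcont.norm
      have hmem : rA ∈ (fun y => ‖A y‖) '' {y | y ∈ Sᗮ ∧ ‖y‖ = 1} := by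
        rw [hrA]
        exact himc.sSup_mem (hne.image _)
      obtain ⟨y, ⟨hy, hy1⟩, hyr⟩ := hmem
      rw [← hyr]
      exact hAlt y hy hy1
  -- A z lies in the affine span W_z
  have hzspan : ∀ z : EuclideanSpace ℝ (Fin n),
      z ∈ affineSpan ℝ (Set.range fun i : Fin (m + 1) => comp i z) :=
    fun z => subset_affineSpan ℝ _ ⟨0, hcomp0 z⟩
  have hAmem : ∀ z, A z ∈ affineSpan ℝ (Set.range fun i : Fin (m + 1) => comp i z) := by
    intro z
    rw [← AffineSubspace.vsub_right_mem_direction_iff_mem (hzspan z), direction_affineSpan]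
    rw [vsub_eq_sub]
    have hmemP : ∀ i : Fin m, ((↑(Submodule.orthogonalProjectionOnto (U i) (comp i.castSucc z)) :
        EuclideanSpace ℝ (Fin n)) - z) ∈
        vectorSpan ℝ (Set.range fun i : Fin (m + 1) => comp i z) := by
      intro i
      have h1 : comp i.succ z -ᵥ comp (0 : Fin (m + 1)) z ∈
          vectorSpan ℝ (Set.range fun i : Fin (m + 1) => comp i z) :=
        vsub_mem_vectorSpan ℝ ⟨i.succ, rfl⟩ ⟨0, rfl⟩
      have h2 : comp i.castSucc z -ᵥ comp (0 : Fin (m + 1)) z ∈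
          vectorSpan ℝ (Set.range fun i : Fin (m + 1) => comp i z) :=
        vsub_mem_vectorSpan ℝ ⟨i.castSucc, rfl⟩ ⟨0, rfl⟩
      rw [vsub_eq_sub, hcomp0] at h1 h2
      have key : (↑(Submodule.orthogonalProjectionOnto (U i) (comp i.castSucc z)) :
          EuclideanSpace ℝ (Fin n)) - z
          = (1 / 2 : ℝ) • (comp i.succ z - z) + (1 / 2 : ℝ) • (comp i.castSucc z - z) := by
        rw [hcompS i z]
        module
      rw [key]
      exact Submodule.add_mem _ (Submodule.smul_mem _ _ h1) (Submodule.smul_mem _ _ h2)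
    have key2 : A z - z = (m : ℝ)⁻¹ • ∑ i : Fin m, (1 / 2 : ℝ) •
        ((↑(Submodule.orthogonalProjectionOnto (U i) (comp i.castSucc z)) : EuclideanSpace ℝ (Fin n)) - z) := by
      rw [hA]
      have hsum : ∑ i : Fin m, (1 / 2 : ℝ) •
          (z + (↑(Submodule.orthogonalProjectionOnto (U i) (comp i.castSucc z)) : EuclideanSpace ℝ (Fin n)))
          = (∑ i : Fin m, (1 / 2 : ℝ) •
            ((↑(Submodule.orthogonalProjectionOnto (U i) (comp i.castSucc z)) :
              EuclideanSpace ℝ (Fin n)) - z)) + m • z := by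
        calc ∑ i : Fin m, (1 / 2 : ℝ) •
            (z + (↑(Submodule.orthogonalProjectionOnto (U i) (comp i.castSucc z)) : EuclideanSpace ℝ (Fin n)))
            = ∑ i : Fin m, ((1 / 2 : ℝ) •
              ((↑(Submodule.orthogonalProjectionOnto (U i) (comp i.castSucc z)) :
                EuclideanSpace ℝ (Fin n)) - z) + z) :=
              Finset.sum_congr rfl fun i _ => by module
          _ = _ := by
              rw [Finset.sum_add_distrib, Finset.sum_const, Finset.card_univ, Fintype.card_fin]
      rw [hsum, smul_add, ← Nat.cast_smul_eq_nsmul ℝ, smul_smul, inv_mul_cancel₀ hmR, one_smul,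
        add_sub_cancel_right]
    rw [key2]
    exact Submodule.smul_mem _ _ (Submodule.sum_mem _ fun i _ =>
      Submodule.smul_mem _ _ (hmemP i))
  -- C z has the same projection onto S as z
  have e1 : ∀ z, z - C z ∈ Sᗮ := by
    intro z
    rw [Submodule.mem_orthogonal]
    intro u hu
    have h1 := hC z u hu z (hzspan z)
    have h2 := hC z 0 S.zero_mem z (hzspan z)
    rw [zero_sub, inner_neg_left, neg_eq_zero] at h2
    rw [inner_sub_left, h2, sub_zero] at h1
    exact h1
  have e2 : ∀ z, (↑(Submodule.orthogonalProjectionOnto S (C z)) : EuclideanSpace ℝ (Fin n)) =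
      ↑(Submodule.orthogonalProjectionOnto S z) := by
    intro z
    have h1 : C z - z ∈ Sᗮ := by
      have h0 := Sᗮ.neg_mem (e1 z)
      rwa [neg_sub] at h0
    have h2 : C z = z + (C z - z) := by abel
    rw [h2, map_add, Submodule.orthogonalProjectionOnto_apply_of_mem_orthogonal h1,
      add_zero]
  -- the one-step contraction
  have e4 : ∀ z, ‖C z - (↑(Submodule.orthogonalProjectionOnto S z) : EuclideanSpace ℝ (Fin n))‖ ≤
      rA * ‖z - ↑(Submodule.orthogonalProjectionOnto S z)‖ := by
    intro z
    set s0 : EuclideanSpace ℝ (Fin n) := ↑(Submodule.orthogonalProjectionOnto S z) with hs0def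
    have hs0 : s0 ∈ S := Submodule.coe_mem _
    have hperp := hC z s0 hs0 (A z) (hAmem z)
    have h1 : ‖C z - s0‖ ≤ ‖A z - s0‖ := by
      have hin : (inner ℝ (A z - C z) (C z - s0) : ℝ) = 0 := by
        have h0 : (inner ℝ (s0 - C z) (A z - C z) : ℝ) = 0 := hperp
        rw [real_inner_comm] at h0
        have hneg : C z - s0 = -(s0 - C z) := (neg_sub _ _).symm
        rw [hneg, inner_neg_right, h0, neg_zero]
      have hsq : ‖A z - s0‖ ^ 2 = ‖A z - C z‖ ^ 2 + ‖C z - s0‖ ^ 2 := by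
        have hd : A z - s0 = (A z - C z) + (C z - s0) := by abel
        rw [hd, norm_add_sq_real, hin]
        ring
      nlinarith [norm_nonneg (A z - s0), norm_nonneg (C z - s0), sq_nonneg ‖A z - C z‖,
        norm_nonneg (A z - C z)]
    have h2 : A (z - s0) = A z - s0 := by
      calc A (z - s0) = A z - A s0 := by
            rw [sub_eq_add_neg, hAadd, ← neg_one_smul ℝ s0, hAsmul, neg_one_smul,
              ← sub_eq_add_neg]
        _ = A z - s0 := by rw [hAfix s0 hs0]
    have h3 : z - s0 ∈ Sᗮ := Submodule.sub_starProjection_mem_orthogonal (K := S) z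
    calc ‖C z - s0‖ ≤ ‖A z - s0‖ := h1
      _ = ‖A (z - s0)‖ := by rw [h2]
      _ ≤ rA * ‖z - s0‖ := hrAb _ h3
  -- iterate
  have f1 : ∀ k : ℕ, (↑(Submodule.orthogonalProjectionOnto S (C^[k] x)) : EuclideanSpace ℝ (Fin n)) =
      ↑(Submodule.orthogonalProjectionOnto S x) ∧
      ‖C^[k] x - (↑(Submodule.orthogonalProjectionOnto S x) : EuclideanSpace ℝ (Fin n))‖ ≤
        rA ^ k * ‖x - ↑(Submodule.orthogonalProjectionOnto S x)‖ := by
    intro k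
    induction k with
    | zero => simp
    | succ k ih =>
      rw [Function.iterate_succ_apply']
      refine ⟨by rw [e2, ih.1], ?_⟩
      have h1 := e4 (C^[k] x)
      rw [ih.1] at h1
      calc ‖C (C^[k] x) - (↑(Submodule.orthogonalProjectionOnto S x) : EuclideanSpace ℝ (Fin n))‖
          ≤ rA * ‖C^[k] x - ↑(Submodule.orthogonalProjectionOnto S x)‖ := h1
        _ ≤ rA * (rA ^ k * ‖x - ↑(Submodule.orthogonalProjectionOnto S x)‖) :=
            mul_le_mul_of_nonneg_left ih.2 hrA0
        _ = rA ^ (k + 1) * ‖x - ↑(Submodule.orthogonalProjectionOnto S x)‖ := by ring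
  refine ⟨hrA0, hrA1, ?_, fun k => (f1 k).2⟩
  rw [tendsto_iff_norm_sub_tendsto_zero]
  have hb : Filter.Tendsto (fun k : ℕ => rA ^ k *
      ‖x - (↑(Submodule.orthogonalProjectionOnto S x) : EuclideanSpace ℝ (Fin n))‖) Filter.atTop (nhds 0) := by
    have hp := tendsto_pow_atTop_nhds_zero_of_lt_one hrA0 hrA1
    simpa using hp.mul_const ‖x - (↑(Submodule.orthogonalProjectionOnto S x) : EuclideanSpace ℝ (Fin n))‖
  exact squeeze_zero (fun k => norm_nonneg _) (fun k => (f1 k).2) hb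
end
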